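/- Let L, M, R be non-trivial connected graphs with pairwise disjoint vertex sets, l ∈ V(L), r ∈ V(R), and distinct u, v ∈ V(M). Let G be obtained by identifying l with u and r with v; let G' be obtained by identifying both l and r with u; let G'' be obtained by identifying both l and r with v. Then N(G') > N(G) or N(G'') > N(G). -/

import Mathlib

/-!
Gluing `R` to `X` by identifying `r` with `w` makes `w` a cut vertex: a connected set avoiding it
lies in one piece, and a connected set containing it is the union of a connected set of `X` and
one of `R` through the glued vertex. Writing `N_x` and `N_xy` for the numbers of connected sets
through `x`, resp. through `x` and `y`, this gives
`N(X ∪_w R) + N_w(X) + N_r(R) = N(X) + N(R) + N_w(X) N_r(R)` and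
`N_z(X ∪_w R) + N_zw(X) = N_z(X) + N_zw(X) N_r(R)`.
Applied twice, with `c = N_uv(M)`, they give
`N(G') - N(G) = (N_r(R) - 1) ((N_u(M) - N_v(M)) + (N_u(M) - c) (N_l(L) - 1))` and
`N(G'') - N(G) = (N_l(L) - 1) ((N_v(M) - N_u(M)) + (N_v(M) - c) (N_r(R) - 1))`.
The singletons `{u}`, `{v}` give `c < N_u(M), N_v(M)`, and `N_l(L), N_r(R) ≥ 2` as `L`, `R` are
connected and non-trivial; so the first difference is positive if `N_u(M) ≥ N_v(M)`, the second
otherwise.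
-/

open SimpleGraph

/-- Number of nonempty vertex subsets inducing a connected subgraph. -/
noncomputable def numConnSub {V : Type*} [Fintype V] (G : SimpleGraph V) : ℕ :=
  Set.ncard {S : Set V | S.Nonempty ∧ (G.induce S).Connected}

/-- Number of vertex subsets containing `u` inducing a connected subgraph. -/
noncomputable def numConnSubAt {V : Type*} [Fintype V] (G : SimpleGraph V) (u : V) : ℕ :=
  Set.ncard {S : Set V | u ∈ S ∧ (G.induce S).Connected}
/-- The graph obtained from `M` by attaching the graph `L` at the vertex `w` of `M`,
identifying the vertex `l` of `L` with `w`. -/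
def attachAt {α β : Type*} (M : SimpleGraph α) (L : SimpleGraph β) (w : α) (l : β) :
    SimpleGraph (α ⊕ {x : β // x ≠ l}) :=
  SimpleGraph.fromRel (fun a b =>
    match a, b with
    | Sum.inl x, Sum.inl y => M.Adj x y
    | Sum.inl x, Sum.inr y => x = w ∧ L.Adj l y.1
    | Sum.inr y, Sum.inl x => x = w ∧ L.Adj l y.1
    | Sum.inr x, Sum.inr y => L.Adj x.1 y.1)

namespace SimpleGraph

variable {V W : Type*} {G : SimpleGraph V} {H : SimpleGraph W}

theorem Reachable.map_of_eq_or_adj {f : V → W}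
    (hf : ∀ ⦃a b⦄, G.Adj a b → f a = f b ∨ H.Adj (f a) (f b)) {a b : V}
    (h : G.Reachable a b) : H.Reachable (f a) (f b) := by
  obtain ⟨p⟩ := h
  induction p with
  | nil => rfl
  | cons hadj _ ih =>
    rcases hf hadj with h | h
    · exact h ▸ ih
    · exact h.reachable.trans ih

theorem induce_image_connected_of_eq_or_adj {f : V → W}
    (hf : ∀ ⦃a b⦄, G.Adj a b → f a = f b ∨ H.Adj (f a) (f b)) {s : Set V}
    (hs : (G.induce s).Connected) : (H.induce (f '' s)).Connected := by
  let g : s → f '' s := fun x => ⟨f x, Set.mem_image_of_mem f x.2⟩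
  have hg : ∀ ⦃x y : s⦄, (G.induce s).Adj x y →
      g x = g y ∨ (H.induce (f '' s)).Adj (g x) (g y) :=
    fun x y hxy => (hf hxy).imp Subtype.ext id
  have : Nonempty (f '' s) := hs.nonempty.map g
  refine ⟨?_⟩
  rintro ⟨_, x, hx, rfl⟩ ⟨_, y, hy, rfl⟩
  exact (hs.preconnected ⟨x, hx⟩ ⟨y, hy⟩).map_of_eq_or_adj hg

theorem induce_image_connected (f : G →g H) {s : Set V} (hs : (G.induce s).Connected) :
    (H.induce (f '' s)).Connected :=
  induce_image_connected_of_eq_or_adj (fun _ _ h => Or.inr (f.map_adj h)) hs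

theorem induce_image_connected_iff (f : G →g H) {p : W → V} (hp : Function.LeftInverse p f)
    (hp_adj : ∀ ⦃a b⦄, H.Adj a b → p a = p b ∨ G.Adj (p a) (p b)) {s : Set V} :
    (H.induce (f '' s)).Connected ↔ (G.induce s).Connected := by
  refine ⟨fun hs => ?_, induce_image_connected f⟩
  have := induce_image_connected_of_eq_or_adj hp_adj hs
  rwa [hp.image_image] at this

theorem induce_singleton_connected (v : V) : (G.induce {v}).Connected := by
  rw [induce_singleton_eq_top, connected_top_iff]
  exact ⟨⟨v, rfl⟩⟩

theorem Connected.induce_univ (hG : G.Connected) : (G.induce Set.univ).Connected :=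
  G.induceUnivIso.connected_iff.mpr hG

end SimpleGraph

section Counting

variable {V : Type*} {G : SimpleGraph V}

noncomputable def numConnSubAt₂ (G : SimpleGraph V) (x y : V) : ℕ :=
  Set.ncard {S : Set V | x ∈ S ∧ y ∈ S ∧ (G.induce S).Connected}

theorem numConnSubAt₂_comm (x y : V) : numConnSubAt₂ G x y = numConnSubAt₂ G y x := by
  simp only [numConnSubAt₂, and_left_comm]

variable [Fintype V]

theorem numConnSub_eq_ncard_notMem_add_numConnSubAt (x : V) :
    numConnSub G = {S : Set V | x ∉ S ∧ (G.induce S).Connected}.ncard + numConnSubAt G x := by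
  rw [numConnSub, numConnSubAt, ← Set.ncard_inter_add_ncard_sdiff_eq_ncard _ {S | x ∉ S}]
  congr 2 <;> ext S <;> simp only [Set.mem_inter_iff, Set.mem_sdiff, Set.mem_ofPred_eq, not_not]
  · exact ⟨fun h => ⟨h.2, h.1.2⟩, fun h => ⟨⟨Set.nonempty_coe_sort.mp h.2.nonempty, h.2⟩, h.1⟩⟩
  · exact ⟨fun h => ⟨h.2, h.1.2⟩, fun h => ⟨⟨⟨x, h.1⟩, h.2⟩, h.1⟩⟩

theorem numConnSubAt_eq_ncard_notMem_add_numConnSubAt₂ (x y : V) :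
    numConnSubAt G x =
      {S : Set V | x ∈ S ∧ y ∉ S ∧ (G.induce S).Connected}.ncard + numConnSubAt₂ G x y := by
  rw [numConnSubAt, numConnSubAt₂, ← Set.ncard_inter_add_ncard_sdiff_eq_ncard _ {S | y ∉ S}]
  congr 2 <;> ext S <;> simp only [Set.mem_inter_iff, Set.mem_sdiff, Set.mem_ofPred_eq] <;> tauto

theorem numConnSubAt₂_self (x : V) : numConnSubAt₂ G x x = numConnSubAt G x := by
  simp only [numConnSubAt₂, numConnSubAt, and_self_left]

theorem numConnSubAt₂_lt_numConnSubAt {x y : V} (hxy : x ≠ y) :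
    numConnSubAt₂ G x y < numConnSubAt G x := by
  refine Set.ncard_lt_ncard ⟨fun S hS => ⟨hS.1, hS.2.2⟩, fun hsub => hxy ?_⟩
  exact (hsub ⟨Set.mem_singleton x, induce_singleton_connected x⟩).2.1.symm

theorem two_le_numConnSubAt [Nontrivial V] (hG : G.Connected) (x : V) :
    2 ≤ numConnSubAt G x := by
  obtain ⟨y, hy⟩ := exists_ne x
  have hne : ({x} : Set V) ≠ Set.univ := fun h => hy (h.symm ▸ Set.mem_univ y : y ∈ ({x} : Set V))
  rw [numConnSubAt, ← Set.ncard_pair hne]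
  refine Set.ncard_le_ncard ?_
  rw [Set.insert_subset_iff, Set.singleton_subset_iff]
  exact ⟨⟨Set.mem_singleton x, induce_singleton_connected x⟩, Set.mem_univ x, hG.induce_univ⟩

end Counting

section AttachAt

variable {α γ : Type*} {X : SimpleGraph α} {R : SimpleGraph γ} {w : α} {r : γ}

@[simp] theorem attachAt_adj_inl_inl {a b : α} :
    (attachAt X R w r).Adj (Sum.inl a) (Sum.inl b) ↔ X.Adj a b := by
  simp only [attachAt, fromRel_adj, ne_eq, Sum.inl.injEq]
  exact ⟨fun h => h.2.elim id X.adj_symm, fun h => ⟨h.ne, Or.inl h⟩⟩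

@[simp] theorem attachAt_adj_inl_inr {a : α} {y : {y : γ // y ≠ r}} :
    (attachAt X R w r).Adj (Sum.inl a) (Sum.inr y) ↔ a = w ∧ R.Adj r y := by
  simp [attachAt]

@[simp] theorem attachAt_adj_inr_inl {a : α} {y : {y : γ // y ≠ r}} :
    (attachAt X R w r).Adj (Sum.inr y) (Sum.inl a) ↔ a = w ∧ R.Adj r y := by
  rw [adj_comm, attachAt_adj_inl_inr]

@[simp] theorem attachAt_adj_inr_inr {y y' : {y : γ // y ≠ r}} :
    (attachAt X R w r).Adj (Sum.inr y) (Sum.inr y') ↔ R.Adj y y' := by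
  simp only [attachAt, fromRel_adj, ne_eq, Sum.inr.injEq]
  exact ⟨fun h => h.2.elim id R.adj_symm,
    fun h => ⟨fun e => h.ne (congrArg Subtype.val e), Or.inl h⟩⟩

namespace attachAt

variable (X R w r) in
def inlHom : X →g attachAt X R w r := ⟨Sum.inl, attachAt_adj_inl_inl.mpr⟩

variable (w) in
def projLeft : α ⊕ {y : γ // y ≠ r} → α := Sum.elim id fun _ => w

def projRight : α ⊕ {y : γ // y ≠ r} → γ := Sum.elim (fun _ => r) Subtype.val

theorem projLeft_eq_or_adj ⦃x x' : α ⊕ {y : γ // y ≠ r}⦄ (h : (attachAt X R w r).Adj x x') :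
    projLeft w x = projLeft w x' ∨ X.Adj (projLeft w x) (projLeft w x') := by
  rcases x with a | y <;> rcases x' with a' | y' <;> simp_all [projLeft]

theorem projRight_eq_or_adj ⦃x x' : α ⊕ {y : γ // y ≠ r}⦄ (h : (attachAt X R w r).Adj x x') :
    projRight x = projRight x' ∨ R.Adj (projRight x) (projRight x') := by
  rcases x with a | y <;> rcases x' with a' | y' <;> simp_all [projRight, R.adj_symm]

theorem projLeft_inlHom : Function.LeftInverse (projLeft w) (inlHom X R w r) := fun _ => rfl

theorem inl_mem_of_induce_connected {S : Set (α ⊕ {y : γ // y ≠ r})}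
    (hS : ((attachAt X R w r).induce S).Connected) {a : α} {y : {y : γ // y ≠ r}}
    (ha : Sum.inl a ∈ S) (hy : Sum.inr y ∈ S) : Sum.inl w ∈ S := by
  obtain ⟨p⟩ := hS.preconnected ⟨_, ha⟩ ⟨_, hy⟩
  obtain ⟨⟨⟨⟨x, hx⟩, ⟨x', hx'⟩⟩, hadj⟩, -, hleft, hright⟩ :=
    p.exists_boundary_dart {x | (x : α ⊕ {y : γ // y ≠ r}).isLeft} rfl (by simp)
  rcases x with a' | _ <;> rcases x' with _ | y'
  · simp at hright
  · exact (attachAt_adj_inl_inr (X := X).mp hadj).1 ▸ hx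
  all_goals simp at hleft

theorem projLeft_image_of_inl_mem {S : Set (α ⊕ {y : γ // y ≠ r})} (hw : Sum.inl w ∈ S) :
    projLeft w '' S = Sum.inl ⁻¹' S := by
  ext a
  refine ⟨?_, fun ha => ⟨_, ha, rfl⟩⟩
  rintro ⟨a' | y, hx, rfl⟩
  exacts [hx, hw]

variable [DecidableEq γ]

variable (X R w r) in
def inrHom : R →g attachAt X R w r where
  toFun y := if h : y = r then Sum.inl w else Sum.inr ⟨y, h⟩
  map_rel' {y y'} h := by
    by_cases hy : y = r <;> by_cases hy' : y' = r <;> subst_vars <;>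
      simp_all [R.adj_symm h]

theorem inrHom_apply_self : inrHom X R w r r = Sum.inl w := dif_pos rfl

theorem inrHom_apply_of_ne {y : γ} (hy : y ≠ r) : inrHom X R w r y = Sum.inr ⟨y, hy⟩ :=
  dif_neg hy

theorem inrHom_eq_inl_iff {y : γ} {a : α} : inrHom X R w r y = Sum.inl a ↔ y = r ∧ w = a := by
  by_cases hy : y = r
  · simp [hy, inrHom_apply_self]
  · simp [hy, inrHom_apply_of_ne hy]

theorem projRight_inrHom : Function.LeftInverse projRight (inrHom X R w r) := by
  intro y
  by_cases hy : y = r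
  · simp [hy, inrHom_apply_self, projRight]
  · simp [inrHom_apply_of_ne hy, projRight]

theorem inrHom_injective : Function.Injective (inrHom X R w r) :=
  projRight_inrHom.injective

theorem range_inl_union_range_inrHom :
    Set.range Sum.inl ∪ Set.range (inrHom X R w r) = Set.univ := by
  refine Set.eq_univ_of_forall fun x => ?_
  rcases x with a | y
  · exact Or.inl ⟨a, rfl⟩
  · exact Or.inr ⟨y, inrHom_apply_of_ne y.2⟩

theorem image_preimage_inl_union_image_preimage_inrHom (S : Set (α ⊕ {y : γ // y ≠ r})) :
    Sum.inl '' (Sum.inl ⁻¹' S) ∪ inrHom X R w r '' (inrHom X R w r ⁻¹' S) = S := by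
  rw [Set.image_preimage_eq_inter_range, Set.image_preimage_eq_inter_range,
    ← Set.inter_union_distrib_left, range_inl_union_range_inrHom, Set.inter_univ]

theorem preimage_inl_image_union {T : Set α} {U : Set γ} (hw : w ∈ T) :
    Sum.inl ⁻¹' (Sum.inl '' T ∪ inrHom X R w r '' U) = T := by
  ext a
  simp only [Set.mem_preimage, Set.mem_union, Set.mem_image, Sum.inl.injEq, exists_eq_right,
    inrHom_eq_inl_iff]
  exact ⟨fun h => h.elim id fun ⟨_, _, _, hwa⟩ => hwa ▸ hw, Or.inl⟩

theorem preimage_inrHom_image_union {T : Set α} {U : Set γ} (hr : r ∈ U) :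
    inrHom X R w r ⁻¹' (Sum.inl '' T ∪ inrHom X R w r '' U) = U := by
  ext y
  simp only [Set.mem_preimage, Set.mem_union, Set.mem_image, inrHom_injective.eq_iff,
    exists_eq_right, eq_comm (b := inrHom X R w r y), inrHom_eq_inl_iff]
  exact ⟨fun h => h.elim (fun ⟨_, _, hyr, _⟩ => hyr ▸ hr) id, Or.inr⟩

theorem projRight_image_of_inl_mem {S : Set (α ⊕ {y : γ // y ≠ r})} (hw : Sum.inl w ∈ S) :
    projRight '' S = inrHom X R w r ⁻¹' S := by
  ext y
  refine ⟨?_, fun hy => ⟨_, hy, projRight_inrHom y⟩⟩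
  rintro ⟨a | y', hx, rfl⟩
  · simpa [projRight, Set.mem_preimage, inrHom_apply_self] using hw
  · simpa [projRight, Set.mem_preimage, inrHom_apply_of_ne y'.2] using hx

theorem induce_connected_iff_of_inl_mem {S : Set (α ⊕ {y : γ // y ≠ r})}
    (hw : Sum.inl w ∈ S) :
    ((attachAt X R w r).induce S).Connected ↔
      (X.induce (Sum.inl ⁻¹' S)).Connected ∧ (R.induce (inrHom X R w r ⁻¹' S)).Connected := by
  refine ⟨fun hS => ⟨?_, ?_⟩, fun ⟨hT, hU⟩ => ?_⟩
  · rw [← projLeft_image_of_inl_mem hw]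
    exact induce_image_connected_of_eq_or_adj projLeft_eq_or_adj hS
  · rw [← projRight_image_of_inl_mem hw]
    exact induce_image_connected_of_eq_or_adj projRight_eq_or_adj hS
  · rw [← image_preimage_inl_union_image_preimage_inrHom (X := X) (R := R) S]
    refine induce_union_connected (induce_image_connected (inlHom X R w r) hT).preconnected
      (induce_image_connected _ hU).preconnected ⟨Sum.inl w, ⟨w, hw, rfl⟩, r, ?_, ?_⟩ <;>
      simp only [Set.mem_preimage, inrHom_apply_self, hw]

theorem induce_connected_iff_of_inl_notMem {S : Set (α ⊕ {y : γ // y ≠ r})}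
    (hw : Sum.inl w ∉ S) :
    ((attachAt X R w r).induce S).Connected ↔
      (∃ T, (X.induce T).Connected ∧ Sum.inl '' T = S) ∨
        ∃ U, (R.induce U).Connected ∧ inrHom X R w r '' U = S := by
  refine ⟨fun hS => ?_, ?_⟩
  · by_cases hinr : ∃ y, Sum.inr y ∈ S
    · obtain ⟨y, hy⟩ := hinr
      have hsub : S ⊆ Set.range (inrHom X R w r) := by
        rintro (a | y') hx
        · exact absurd (inl_mem_of_induce_connected hS hx hy) hw
        · exact ⟨y', inrHom_apply_of_ne y'.2⟩
      obtain ⟨U, rfl⟩ := Set.subset_range_iff_exists_image_eq.mp hsub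
      exact Or.inr ⟨U, (induce_image_connected_iff _ projRight_inrHom projRight_eq_or_adj).mp hS,
        rfl⟩
    · have hsub : S ⊆ Set.range Sum.inl := by
        rintro (a | y) hx
        exacts [⟨a, rfl⟩, absurd ⟨y, hx⟩ hinr]
      obtain ⟨T, rfl⟩ := Set.subset_range_iff_exists_image_eq.mp hsub
      exact Or.inl ⟨T, (induce_image_connected_iff (inlHom X R w r) projLeft_inlHom
        projLeft_eq_or_adj).mp hS, rfl⟩
  · rintro (⟨T, hT, rfl⟩ | ⟨U, hU, rfl⟩)
    exacts [induce_image_connected (inlHom X R w r) hT, induce_image_connected _ hU]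

end attachAt

end AttachAt

section AttachAtCount

variable {α γ : Type*} {X : SimpleGraph α} {R : SimpleGraph γ} {w : α} {r : γ}
  [DecidableEq γ]

open attachAt

theorem ncard_inl_mem_inl_notMem_attachAt (z : α) :
    {S : Set (α ⊕ {y : γ // y ≠ r}) |
        Sum.inl z ∈ S ∧ Sum.inl w ∉ S ∧ ((attachAt X R w r).induce S).Connected}.ncard =
      {T : Set α | z ∈ T ∧ w ∉ T ∧ (X.induce T).Connected}.ncard := by
  rw [← Set.ncard_image_of_injective {T : Set α | z ∈ T ∧ w ∉ T ∧ (X.induce T).Connected}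
    (Set.image_injective.mpr (Sum.inl_injective (β := {y : γ // y ≠ r})))]
  congr 1
  ext S
  simp only [Set.mem_ofPred_eq, Set.mem_image]
  constructor
  · rintro ⟨hz, hw, hS⟩
    rcases (induce_connected_iff_of_inl_notMem hw).mp hS with ⟨T, hT, rfl⟩ | ⟨U, -, rfl⟩
    · refine ⟨T, ⟨?_, fun h => hw ⟨w, h, rfl⟩, hT⟩, rfl⟩
      obtain ⟨a, ha, haz⟩ := hz
      exact Sum.inl_injective haz ▸ ha
    · obtain ⟨y, hy, hyz⟩ := hz
      obtain ⟨rfl, rfl⟩ := inrHom_eq_inl_iff.mp hyz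
      exact absurd ⟨y, hy, hyz⟩ hw
  · rintro ⟨T, ⟨hz, hwT, hT⟩, rfl⟩
    exact ⟨⟨z, hz, rfl⟩, fun ⟨a, ha, haw⟩ => hwT (Sum.inl_injective haw ▸ ha),
      induce_image_connected (inlHom X R w r) hT⟩

theorem ncard_inl_notMem_attachAt [Finite α] [Finite γ] :
    {S : Set (α ⊕ {y : γ // y ≠ r}) |
        Sum.inl w ∉ S ∧ ((attachAt X R w r).induce S).Connected}.ncard =
      {T : Set α | w ∉ T ∧ (X.induce T).Connected}.ncard +
        {U : Set γ | r ∉ U ∧ (R.induce U).Connected}.ncard := by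
  have hset : {S : Set (α ⊕ {y : γ // y ≠ r}) |
        Sum.inl w ∉ S ∧ ((attachAt X R w r).induce S).Connected} =
      Set.image Sum.inl '' {T : Set α | w ∉ T ∧ (X.induce T).Connected} ∪
        Set.image (inrHom X R w r) '' {U : Set γ | r ∉ U ∧ (R.induce U).Connected} := by
    ext S
    simp only [Set.mem_ofPred_eq, Set.mem_union, Set.mem_image]
    constructor
    · rintro ⟨hw, hS⟩
      rcases (induce_connected_iff_of_inl_notMem hw).mp hS with ⟨T, hT, rfl⟩ | ⟨U, hU, rfl⟩
      · exact Or.inl ⟨T, ⟨fun h => hw ⟨w, h, rfl⟩, hT⟩, rfl⟩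
      · exact Or.inr ⟨U, ⟨fun h => hw ⟨r, h, inrHom_apply_self⟩, hU⟩, rfl⟩
    · rintro (⟨T, ⟨hwT, hT⟩, rfl⟩ | ⟨U, ⟨hrU, hU⟩, rfl⟩)
      · exact ⟨fun ⟨a, ha, haw⟩ => hwT (Sum.inl_injective haw ▸ ha),
          induce_image_connected (inlHom X R w r) hT⟩
      · exact ⟨fun ⟨y, hy, hyw⟩ => hrU ((inrHom_eq_inl_iff.mp hyw).1 ▸ hy),
          induce_image_connected _ hU⟩
  have hdisj : Disjoint (Set.image Sum.inl '' {T : Set α | w ∉ T ∧ (X.induce T).Connected})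
      (Set.image (inrHom X R w r) '' {U : Set γ | r ∉ U ∧ (R.induce U).Connected}) := by
    rw [Set.disjoint_left]
    rintro _ ⟨T, ⟨-, hT⟩, rfl⟩ ⟨U, ⟨hrU, -⟩, hUT⟩
    obtain ⟨a, ha⟩ := hT.nonempty
    obtain ⟨y, hy, hya⟩ := hUT ▸ Set.mem_image_of_mem Sum.inl ha
    exact hrU ((inrHom_eq_inl_iff.mp hya).1 ▸ hy)
  rw [hset, Set.ncard_union_eq hdisj,
    Set.ncard_image_of_injective _ (Set.image_injective.mpr Sum.inl_injective),
    Set.ncard_image_of_injective _ (Set.image_injective.mpr inrHom_injective)]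

variable [Fintype γ]

theorem numConnSubAt₂_attachAt_inl (z : α) :
    numConnSubAt₂ (attachAt X R w r) (Sum.inl z) (Sum.inl w) =
      numConnSubAt₂ X z w * numConnSubAt R r := by
  rw [numConnSubAt₂, numConnSubAt₂, numConnSubAt, ← Set.ncard_prod]
  refine Set.ncard_congr (fun S _ => (Sum.inl ⁻¹' S, inrHom X R w r ⁻¹' S)) ?_ ?_ ?_
  · rintro S ⟨hz, hw, hS⟩
    obtain ⟨hT, hU⟩ := (induce_connected_iff_of_inl_mem hw).mp hS
    refine ⟨⟨hz, hw, hT⟩, ?_, hU⟩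
    rwa [Set.mem_preimage, inrHom_apply_self]
  · intro S S' _ _ h
    rw [← image_preimage_inl_union_image_preimage_inrHom (X := X) (R := R) (w := w) S,
      ← image_preimage_inl_union_image_preimage_inrHom (X := X) (R := R) (w := w) S',
      (Prod.mk.inj h).1, (Prod.mk.inj h).2]
  · rintro ⟨T, U⟩ ⟨⟨hz, hw, hT⟩, hr, hU⟩
    have hT' := preimage_inl_image_union (X := X) (R := R) (r := r) (U := U) hw
    have hU' := preimage_inrHom_image_union (X := X) (R := R) (w := w) (T := T) hr
    have hwS : Sum.inl w ∈ Sum.inl '' T ∪ inrHom X R w r '' U := Or.inl ⟨w, hw, rfl⟩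
    refine ⟨_, ⟨Or.inl ⟨z, hz, rfl⟩, hwS, ?_⟩, by rw [hT', hU']⟩
    rw [induce_connected_iff_of_inl_mem hwS, hT', hU']
    exact ⟨hT, hU⟩

variable [Fintype α]

theorem numConnSubAt_attachAt_inl_self :
    numConnSubAt (attachAt X R w r) (Sum.inl w) = numConnSubAt X w * numConnSubAt R r := by
  rw [← numConnSubAt₂_self, numConnSubAt₂_attachAt_inl, numConnSubAt₂_self]

theorem numConnSub_attachAt :
    numConnSub (attachAt X R w r) + numConnSubAt X w + numConnSubAt R r =
      numConnSub X + numConnSub R + numConnSubAt X w * numConnSubAt R r := by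
  rw [numConnSub_eq_ncard_notMem_add_numConnSubAt (Sum.inl w), ncard_inl_notMem_attachAt,
    numConnSubAt_attachAt_inl_self, numConnSub_eq_ncard_notMem_add_numConnSubAt (G := X) w,
    numConnSub_eq_ncard_notMem_add_numConnSubAt (G := R) r]
  ring

theorem numConnSubAt_attachAt_inl (z : α) :
    numConnSubAt (attachAt X R w r) (Sum.inl z) + numConnSubAt₂ X z w =
      numConnSubAt X z + numConnSubAt₂ X z w * numConnSubAt R r := by
  rw [numConnSubAt_eq_ncard_notMem_add_numConnSubAt₂ _ (Sum.inl w),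
    ncard_inl_mem_inl_notMem_attachAt, numConnSubAt₂_attachAt_inl,
    numConnSubAt_eq_ncard_notMem_add_numConnSubAt₂ (G := X) z w]
  ring

end AttachAtCount

theorem numConnSub_attachAt_attachAt_inl {α β γ : Type*} [Fintype α] [Fintype β] [Fintype γ]
    [DecidableEq β] [DecidableEq γ] (M : SimpleGraph α) (L : SimpleGraph β) (R : SimpleGraph γ)
    (u w : α) (l : β) (r : γ) :
    (numConnSub (attachAt (attachAt M L u l) R (Sum.inl w) r) : ℤ) =
      numConnSub M + numConnSub L + numConnSub R - numConnSubAt L l - numConnSubAt R r +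
        numConnSubAt M u * (numConnSubAt L l - 1) +
        (numConnSubAt M w + numConnSubAt₂ M w u * (numConnSubAt L l - 1)) *
          (numConnSubAt R r - 1) := by
  have hG := numConnSub_attachAt (X := attachAt M L u l) (R := R) (w := Sum.inl w) (r := r)
  have hH := numConnSub_attachAt (X := M) (R := L) (w := u) (r := l)
  have hw := numConnSubAt_attachAt_inl (X := M) (R := L) (w := u) (r := l) w
  zify at hG hH hw
  linear_combination hG + hH + ((numConnSubAt R r : ℤ) - 1) * hw

theorem numConnSub_attach_general {α β γ : Type*} [Fintype α] [Fintype β] [Fintype γ]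
    [DecidableEq β] [DecidableEq γ]
    (M : SimpleGraph α) (L : SimpleGraph β) (R : SimpleGraph γ)
    (u v : α) (l : β) (r : γ) (huv : u ≠ v)
    (hL : L.Connected) (hR : R.Connected)
    (hLn : 1 < Fintype.card β) (hRn : 1 < Fintype.card γ) :
    numConnSub (attachAt (attachAt M L u l) R (Sum.inl u) r) >
        numConnSub (attachAt (attachAt M L u l) R (Sum.inl v) r) ∨
      numConnSub (attachAt (attachAt M L v l) R (Sum.inl v) r) >
        numConnSub (attachAt (attachAt M L u l) R (Sum.inl v) r) := by
  have := Fintype.one_lt_card_iff_nontrivial.mp hLn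
  have := Fintype.one_lt_card_iff_nontrivial.mp hRn
  have hL2 : (0 : ℤ) < numConnSubAt L l - 1 := by
    have := two_le_numConnSubAt hL l; omega
  have hR2 : (0 : ℤ) < numConnSubAt R r - 1 := by
    have := two_le_numConnSubAt hR r; omega
  have hu : (0 : ℤ) < numConnSubAt M u - numConnSubAt₂ M v u := by
    have := numConnSubAt₂_comm (G := M) u v ▸ numConnSubAt₂_lt_numConnSubAt huv; omega
  have hv : (0 : ℤ) < numConnSubAt M v - numConnSubAt₂ M v u := by
    have := numConnSubAt₂_lt_numConnSubAt (G := M) huv.symm; omega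
  simp only [gt_iff_lt, ← Int.ofNat_lt, numConnSub_attachAt_attachAt_inl, numConnSubAt₂_self]
  rcases le_or_gt (numConnSubAt M v : ℤ) (numConnSubAt M u) with h | h
  · exact Or.inl (by linarith [mul_pos (mul_pos hu hL2) hR2, mul_nonneg (sub_nonneg.2 h) hR2.le])
  · exact Or.inr (by linarith [mul_pos (sub_pos.2 h) hL2, mul_pos (mul_pos hv hL2) hR2])

/-- Let `L, M, R` be non-trivial connected graphs, `l ∈ V(L)`, `r ∈ V(R)`, and distinct
`u, v ∈ V(M)`.  Let `G` identify `l` with `u` and `r` with `v`, let `G'` identify both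
`l, r` with `u`, and let `G''` identify both `l, r` with `v`.  Then
`N(G') > N(G)` or `N(G'') > N(G)`. -/
theorem numConnSub_attach {α β γ : Type*} [Fintype α] [Fintype β] [Fintype γ]
    [DecidableEq β] [DecidableEq γ]
    (M : SimpleGraph α) (L : SimpleGraph β) (R : SimpleGraph γ)
    (u v : α) (l : β) (r : γ) (huv : u ≠ v)
    (hM : M.Connected) (hL : L.Connected) (hR : R.Connected)
    (hMn : 1 < Fintype.card α) (hLn : 1 < Fintype.card β) (hRn : 1 < Fintype.card γ) :
    numConnSub (attachAt (attachAt M L u l) R (Sum.inl u) r) >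
        numConnSub (attachAt (attachAt M L u l) R (Sum.inl v) r) ∨
      numConnSub (attachAt (attachAt M L v l) R (Sum.inl v) r) >
        numConnSub (attachAt (attachAt M L u l) R (Sum.inl v) r) :=
  numConnSub_attach_general M L R u v l r huv hL hR hLn hRn
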